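/- Let t be a non-nil full binary tree with real values (t : Tree ℝ) satisfying the tournament property: every node of t whose two subtrees are non-nil carries a value equal to the minimum of the values carried by the roots of its two subtrees. Then the value carried by the root of t equals the minimum of the values carried by the leaves of t. -/

import Mathlib

/-- A binary tree is full if every node has either both subtrees nil or both non-nil. -/
def IsFullTree {α : Type*} : BinaryTree α → Prop
  | BinaryTree.nil => True
  | BinaryTree.node _ l r =>
      ((l = BinaryTree.nil ∧ r = BinaryTree.nil) ∨ (l ≠ BinaryTree.nil ∧ r ≠ BinaryTree.nil)) ∧
      IsFullTree l ∧ IsFullTree r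

/-- The tournament property: every node whose two subtrees are non-nil carries a
value equal to the minimum of the values carried by the roots of its subtrees. -/
def IsTournamentTree : BinaryTree ℝ → Prop
  | BinaryTree.nil => True
  | BinaryTree.node a l r =>
      (∀ (x : ℝ) (l₁ l₂ : BinaryTree ℝ) (y : ℝ) (r₁ r₂ : BinaryTree ℝ),
        l = BinaryTree.node x l₁ l₂ → r = BinaryTree.node y r₁ r₂ → a = min x y) ∧
      IsTournamentTree l ∧ IsTournamentTree r

/-- The list of values carried by the leaves (nodes with both subtrees nil) of a tree. -/
def leafValues : BinaryTree ℝ → List ℝ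
  | BinaryTree.nil => []
  | BinaryTree.node a BinaryTree.nil BinaryTree.nil => [a]
  | BinaryTree.node _ l r => leafValues l ++ leafValues r

open BinaryTree

/- By induction: fullness leaves only a leaf, whose single leaf value is its root, or a node with
two non-nil children, whose leaves split the tree's leaves; the tournament property then makes
the root the minimum of the two children's leaf minima. -/

theorem leafValues_node_node (a x y : ℝ) (l₁ l₂ r₁ r₂ : BinaryTree ℝ) :
    leafValues (node a (node x l₁ l₂) (node y r₁ r₂)) =
      leafValues (node x l₁ l₂) ++ leafValues (node y r₁ r₂) :=
  rfl

/-- In a non-nil full binary tree with the tournament property, the value carried by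
the root equals the minimum of the values carried by the leaves. -/
theorem root_eq_min_leafValues (a : ℝ) (l r : BinaryTree ℝ)
    (hfull : IsFullTree (BinaryTree.node a l r))
    (htour : IsTournamentTree (BinaryTree.node a l r)) :
    (leafValues (BinaryTree.node a l r)).minimum = (a : WithTop ℝ) := by
  match l, r, hfull, htour with
  | nil, nil, _, _ => rfl
  | node x l₁ l₂, node y r₁ r₂, ⟨_, hfull_l, hfull_r⟩, ⟨hroot, htour_l, htour_r⟩ =>
    rw [leafValues_node_node, List.minimum_append, root_eq_min_leafValues x l₁ l₂ hfull_l htour_l,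
      root_eq_min_leafValues y r₁ r₂ hfull_r htour_r, hroot x l₁ l₂ y r₁ r₂ rfl rfl,
      WithTop.coe_min]
  | nil, node .., ⟨hshape, _⟩, _ => simp at hshape
  | node .., nil, ⟨hshape, _⟩, _ => simp at hshape
termination_by sizeOf l + sizeOf r
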